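/- Suppose n = 3. In H, setting φ_i = x_i g_{i+1} for i = 1, 2, 3 (subscripts mod 3), one has φ_i φ_{i+1} − ζ φ_{i+1} φ_i = ζ t_i for all i. -/

import Mathlib

/-!
Common setup for the twisted graded Hecke algebra associated to the homocyclic
group `G ≅ (ℤ/ℓℤ)^{n-1}` (Gan–Highfield, "Center of twisted graded Hecke
algebras for homocyclic groups").

All indices are 0-based: the paper's `x_i, g_i, t_i, τ_i` (for `i = 1, …, n`)
correspond to index `i - 1 : Fin n` here; subscripts are taken mod `n` via the
(wrap-around) addition of `Fin n`.
-/

noncomputable section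

namespace TGHA

/-- `ζ` raised to an exponent in `ZMod ℓ` (representative taken in `{0, …, ℓ-1}`). -/
def zp (ℓ : ℕ) (ζ : ℂ) (z : ZMod ℓ) : ℂ := ζ ^ z.val

/-- Given the vector `a` of diagonal exponents of a group element
`g = diag(ζ^{a 0}, …, ζ^{a (n-1)})`, `pS n ℓ a k` is the exponent `i_k` of `g_k` when
`g` is written as `g₁^{i₁} ⋯ g_{n-1}^{i_{n-1}}`, namely the partial sum `a 0 + ⋯ + a (k-1)`. -/
def pS (n ℓ : ℕ) [NeZero n] (a : Fin n → ZMod ℓ) (k : ℕ) : ZMod ℓ :=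
  ∑ m ∈ Finset.range k, a (Fin.ofNat n m)

/-- The 2-cocycle `α : G × G → ℂˣ`,
`α(g₁^{i₁}⋯g_{n-1}^{i_{n-1}}, g₁^{j₁}⋯g_{n-1}^{j_{n-1}}) = ζ^{-i₁j₂ - i₂j₃ - ⋯ - i_{n-2}j_{n-1}}`,
expressed in terms of the vectors of diagonal exponents of the two group elements. -/
def coc (n ℓ : ℕ) [NeZero n] (ζ : ℂ) (a b : Fin n → ZMod ℓ) : ℂ :=
  zp ℓ ζ (-∑ k ∈ Finset.Icc 1 (n - 2), pS n ℓ a k * pS n ℓ b (k + 1))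

/-- The homocyclic group `G`: diagonal matrices `g = diag(ζ^{a 0}, …, ζ^{a (n-1)})` in
`SL_n(ℂ)` with `g^ℓ = 1`, identified with their vectors `a` of exponents; the condition
`det g = 1` is `∑ i, a i = 0`. Written additively. -/
def Gsub (n ℓ : ℕ) : AddSubgroup (Fin n → ZMod ℓ) where
  carrier := {a | ∑ i, a i = 0}
  zero_mem' := by simp
  add_mem' := by
    intro a b ha hb
    simp only [Set.mem_setOf_eq] at *
    simp [Finset.sum_add_distrib, ha, hb]
  neg_mem' := by
    intro a ha
    simp only [Set.mem_setOf_eq] at *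
    simp [ha]

abbrev G (n ℓ : ℕ) := ↥(Gsub n ℓ)

/-- The vector of diagonal exponents of the generator `g_i`
(`g_i x_i = ζ x_i`, `g_i x_{i+1} = ζ⁻¹ x_{i+1}`, `g_i x_j = x_j` otherwise). -/
def gvec (n ℓ : ℕ) [NeZero n] (i : Fin n) : Fin n → ZMod ℓ :=
  Pi.single i 1 - Pi.single (i + 1) 1

lemma gvec_mem (n ℓ : ℕ) [NeZero n] (i : Fin n) : gvec n ℓ i ∈ Gsub n ℓ := by
  show ∑ j, gvec n ℓ i j = 0
  simp [gvec, Finset.sum_sub_distrib]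

/-- The generator `g_i` as an element of `G`. -/
def gelt (n ℓ : ℕ) [NeZero n] (i : Fin n) : G n ℓ := ⟨gvec n ℓ i, gvec_mem n ℓ i⟩

/-- The defining relations of the twisted graded Hecke algebra `H`, as a quotient of the
free algebra on generators `x_i` (`Sum.inl i`) and `u_g`, `g ∈ G` (`Sum.inr g`): the
relations `u_g u_h = α(g,h) u_{gh}`, `u_1 = 1`, `u_g x_i = ζ^{a_i} x_i u_g` present the
crossed product `TV #_α G`, and the last two relations are the Hecke relations
`x_i x_{i+1} - x_{i+1} x_i = t_i g_i` and `x_i x_j = x_j x_i` for `|i - j| ∉ {1, n-1}`. -/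
inductive Rel (n ℓ : ℕ) [NeZero n] (ζ : ℂ) (t : Fin n → ℂ) :
    FreeAlgebra ℂ (Fin n ⊕ G n ℓ) → FreeAlgebra ℂ (Fin n ⊕ G n ℓ) → Prop
  | grp (g h : G n ℓ) :
      Rel n ℓ ζ t (FreeAlgebra.ι ℂ (Sum.inr g) * FreeAlgebra.ι ℂ (Sum.inr h))
        (coc n ℓ ζ g.1 h.1 • FreeAlgebra.ι ℂ (Sum.inr (g + h)))
  | one : Rel n ℓ ζ t (FreeAlgebra.ι ℂ (Sum.inr (0 : G n ℓ))) 1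
  | gx (g : G n ℓ) (i : Fin n) :
      Rel n ℓ ζ t (FreeAlgebra.ι ℂ (Sum.inr g) * FreeAlgebra.ι ℂ (Sum.inl i))
        (zp ℓ ζ (g.1 i) • (FreeAlgebra.ι ℂ (Sum.inl i) * FreeAlgebra.ι ℂ (Sum.inr g)))
  | hecke (i : Fin n) :
      Rel n ℓ ζ t
        (FreeAlgebra.ι ℂ (Sum.inl i) * FreeAlgebra.ι ℂ (Sum.inl (i + 1)) -
          FreeAlgebra.ι ℂ (Sum.inl (i + 1)) * FreeAlgebra.ι ℂ (Sum.inl i))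
        (t i • FreeAlgebra.ι ℂ (Sum.inr (gelt n ℓ i)))
  | commx (i j : Fin n) (h₁ : j ≠ i + 1) (h₂ : i ≠ j + 1) :
      Rel n ℓ ζ t (FreeAlgebra.ι ℂ (Sum.inl i) * FreeAlgebra.ι ℂ (Sum.inl j))
        (FreeAlgebra.ι ℂ (Sum.inl j) * FreeAlgebra.ι ℂ (Sum.inl i))

/-- The twisted graded Hecke algebra `H`. -/
abbrev H (n ℓ : ℕ) [NeZero n] (ζ : ℂ) (t : Fin n → ℂ) := RingQuot (Rel n ℓ ζ t)

/-- The image of `x_i` in `H`. -/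
def xx (n ℓ : ℕ) [NeZero n] (ζ : ℂ) (t : Fin n → ℂ) (i : Fin n) : H n ℓ ζ t :=
  RingQuot.mkAlgHom ℂ (Rel n ℓ ζ t) (FreeAlgebra.ι ℂ (Sum.inl i))

/-- The image of `g ∈ G` in `H`. -/
def ug (n ℓ : ℕ) [NeZero n] (ζ : ℂ) (t : Fin n → ℂ) (g : G n ℓ) : H n ℓ ζ t :=
  RingQuot.mkAlgHom ℂ (Rel n ℓ ζ t) (FreeAlgebra.ι ℂ (Sum.inr g))

/-- Index set for the basis `y^p u_g` of the crossed product `ℂ[y₁^±,…,y_n^±] #_α G`. -/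
abbrev M (n ℓ : ℕ) := (Fin n → ℤ) × G n ℓ

/-- `χ(g, p)`: the scalar by which `g = diag(ζ^{a 0}, …)` acts on the Laurent monomial `y^p`;
for `g = g_i` it is `ζ^{p_i - p_{i+1}}`. -/
def chi (n ℓ : ℕ) [NeZero n] (ζ : ℂ) (a : Fin n → ZMod ℓ) (p : Fin n → ℤ) : ℂ :=
  zp ℓ ζ (∑ j, a j * (p j : ZMod ℓ))

/-- Structure constants of the crossed product `ℂ[y₁^±,…,y_n^±] #_α G` with respect to its
basis: `(y^p u_g) (y^q u_h) = α(g,h) χ(g,q) y^{p+q} u_{gh}`. -/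
def sigma (n ℓ : ℕ) [NeZero n] (ζ : ℂ) (a b : M n ℓ) : ℂ :=
  coc n ℓ ζ a.2.1 b.2.1 * chi n ℓ ζ a.2.1 b.1

/-- The basis element `y^p u_g` (`a = (p, g)`) of the crossed product
`ℂ[y₁^±,…,y_n^±] #_α G`, realized faithfully as the operator of left multiplication by it
on the underlying vector space of the crossed product. -/
def Top (n ℓ : ℕ) [NeZero n] (ζ : ℂ) (a : M n ℓ) : Module.End ℂ (M n ℓ →₀ ℂ) :=
  Finsupp.lsum ℂ fun b => sigma n ℓ ζ a b • Finsupp.lsingle (a + b)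

/-- The algebra containing (the left regular realization of) the crossed product
`ℂ[y₁^±,…,y_n^±] #_α G`. -/
abbrev A (n ℓ : ℕ) := Module.End ℂ (M n ℓ →₀ ℂ)

/-- The element `u_g`, `g ∈ G`, of the crossed product. -/
def Uy (n ℓ : ℕ) [NeZero n] (ζ : ℂ) (g : G n ℓ) : A n ℓ := Top n ℓ ζ (0, g)

/-- The element `y_i` of the crossed product. -/
def Ygen (n ℓ : ℕ) [NeZero n] (ζ : ℂ) (i : Fin n) : A n ℓ := Top n ℓ ζ (Pi.single i 1, 0)

/-- The element `y_i⁻¹` of the crossed product. -/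
def Yinv (n ℓ : ℕ) [NeZero n] (ζ : ℂ) (i : Fin n) : A n ℓ := Top n ℓ ζ (-Pi.single i 1, 0)

/-- `τ_i = t_i/(ζ-1)` for `i = 1, …, n-1` and `τ_n = ζ t_n/(ζ - 1)`. -/
def tau (n : ℕ) (ζ : ℂ) (t : Fin n → ℂ) (i : Fin n) : ℂ :=
  if (i : ℕ) = n - 1 then ζ * t i / (ζ - 1) else t i / (ζ - 1)

/-- `τ̃_i = τ_i^ℓ` for `i = 1, …, n-1` and `τ̃_n = (-1)^{n(ℓ-1)} τ_n^ℓ`. -/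
def taut (n ℓ : ℕ) (ζ : ℂ) (t : Fin n → ℂ) (i : Fin n) : ℂ :=
  if (i : ℕ) = n - 1 then (-1) ^ (n * (ℓ - 1)) * tau n ζ t i ^ ℓ else tau n ζ t i ^ ℓ

/-- The index set `J`: subsets `{i₁ < ⋯ < i_k}` of `{1, …, n}` with
`|i_r - i_s| ∉ {1, n-1}`, i.e. containing no pair of (cyclically) adjacent indices. -/
def Jset (n : ℕ) [NeZero n] : Finset (Finset (Fin n)) :=
  Finset.univ.filter fun S => ∀ i ∈ S, ∀ j ∈ S, j ≠ i + 1

/-- The exponent vector `δ - ε_{i₁} - ⋯ - ε_{i_k}` for `S = {i₁, …, i_k} ∈ J`: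
the entry at `j` is `0` if some `ε_i`, `i ∈ S`, covers position `j` (i.e. `j ∈ S` or
`j - 1 ∈ S` cyclically) and `1` otherwise. -/
def expS (n : ℕ) [NeZero n] (S : Finset (Fin n)) (j : Fin n) : ℕ :=
  if j ∈ S ∨ j - 1 ∈ S then 0 else 1

/-- The ordered monomial `x₁^{p₁} ⋯ x_n^{p_n} ∈ H`. -/
def xpow (n ℓ : ℕ) [NeZero n] (ζ : ℂ) (t : Fin n → ℂ) (p : Fin n → ℕ) : H n ℓ ζ t :=
  ((List.finRange n).map fun j => xx n ℓ ζ t j ^ p j).prod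

/-- The product `g_{i₁} * ⋯ * g_{i_k} ∈ H` over `S = {i₁ < ⋯ < i_k}` (in increasing
order); since `u_g u_h = α(g,h) u_{gh}` holds in `H`, this is the `*`-product. -/
def gprodS (n ℓ : ℕ) [NeZero n] (ζ : ℂ) (t : Fin n → ℂ) (S : Finset (Fin n)) :
    H n ℓ ζ t :=
  ((S.sort (· ≤ ·)).map fun i => ug n ℓ ζ t (gelt n ℓ i)).prod

/-- The element `w = Σ_{{i₁<⋯<i_k} ∈ J} τ_{i₁} ⋯ τ_{i_k} x^{δ-ε_{i₁}-⋯-ε_{i_k}}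
g_{i₁} * ⋯ * g_{i_k}` of `H`. -/
def w (n ℓ : ℕ) [NeZero n] (ζ : ℂ) (t : Fin n → ℂ) : H n ℓ ζ t :=
  ∑ S ∈ Jset n, (∏ i ∈ S, tau n ζ t i) • (xpow n ℓ ζ t (expS n S) * gprodS n ℓ ζ t S)

/-- `ν_r = (-1)^r (ℓ/(ℓ-r)) C(ℓ-r, r)`. -/
def nu (ℓ r : ℕ) : ℂ := (-1) ^ r * ((ℓ : ℂ) / ((ℓ : ℂ) - (r : ℂ))) * (Nat.choose (ℓ - r) r : ℂ)

/-- The polynomial `F` in the variables `a_i = X (Sum.inl i)` and `b = X (Sum.inr ())`. -/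
def Fpoly (n ℓ : ℕ) [NeZero n] (ζ : ℂ) (t : Fin n → ℂ) : MvPolynomial (Fin n ⊕ Unit) ℂ :=
  (∑ S ∈ Jset n, (∏ i ∈ S, taut n ℓ ζ t i) •
      ∏ j : Fin n, MvPolynomial.X (Sum.inl j) ^ expS n S j) -
    ∑ r ∈ Finset.range (ℓ / 2 + 1),
      ((-1) ^ (n * r) * ζ ^ ((n - 2) * r) * nu ℓ r * (∏ i : Fin n, tau n ζ t i) ^ r) •
        MvPolynomial.X (Sum.inr ()) ^ (ℓ - 2 * r)

end TGHA

/-!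
Moving `u_g` past `x_j` costs the character value `ζ^{g_j}`, and merging `u_g u_h` costs the
cocycle value `α(g, h)`. Hence `φ_i φ_{i+1}` and `φ_{i+1} φ_i` are scalar multiples of
`x_i x_{i+1} u` and `x_{i+1} x_i u` with the same `u = g_{i+1} * g_{i+2}`, and for `n = 3` the
two scalars differ exactly by the factor `ζ`, so the left side is a multiple of
`[x_i, x_{i+1}] u = t_i g_i * g_{i+1} * g_{i+2}`. Since `g_i g_{i+1} g_{i+2} = 1`, this is a
scalar; all scalars are powers of `ζ`, and comparing exponents in `ℤ/ℓℤ` gives `ζ t_i`.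
-/

namespace TGHA

section Relations

variable {n ℓ : ℕ} [NeZero n] {ζ : ℂ} {t : Fin n → ℂ}

theorem ug_mul_ug (g h : G n ℓ) :
    ug n ℓ ζ t g * ug n ℓ ζ t h = coc n ℓ ζ g.1 h.1 • ug n ℓ ζ t (g + h) := by
  simpa only [ug, map_mul, map_smul] using
    RingQuot.mkAlgHom_rel ℂ (Rel.grp (ζ := ζ) (t := t) g h)

theorem ug_zero : ug n ℓ ζ t 0 = 1 := by
  simpa only [ug, map_one] using
    RingQuot.mkAlgHom_rel ℂ (Rel.one (n := n) (ℓ := ℓ) (ζ := ζ) (t := t))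

theorem ug_mul_xx (g : G n ℓ) (i : Fin n) :
    ug n ℓ ζ t g * xx n ℓ ζ t i = zp ℓ ζ (g.1 i) • (xx n ℓ ζ t i * ug n ℓ ζ t g) := by
  simpa only [ug, xx, map_mul, map_smul] using
    RingQuot.mkAlgHom_rel ℂ (Rel.gx (ζ := ζ) (t := t) g i)

theorem xx_mul_xx_succ_sub (i : Fin n) :
    xx n ℓ ζ t i * xx n ℓ ζ t (i + 1) - xx n ℓ ζ t (i + 1) * xx n ℓ ζ t i =
      t i • ug n ℓ ζ t (gelt n ℓ i) := by
  simpa only [ug, xx, map_sub, map_mul, map_smul] using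
    RingQuot.mkAlgHom_rel ℂ (Rel.hecke (ℓ := ℓ) (ζ := ζ) (t := t) i)

theorem xx_mul_ug_mul_xx_mul_ug (i j : Fin n) (g h : G n ℓ) :
    (xx n ℓ ζ t i * ug n ℓ ζ t g) * (xx n ℓ ζ t j * ug n ℓ ζ t h) =
      (zp ℓ ζ (g.1 j) * coc n ℓ ζ g.1 h.1) •
        (xx n ℓ ζ t i * xx n ℓ ζ t j * ug n ℓ ζ t (g + h)) := by
  calc (xx n ℓ ζ t i * ug n ℓ ζ t g) * (xx n ℓ ζ t j * ug n ℓ ζ t h)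
      = xx n ℓ ζ t i * (ug n ℓ ζ t g * xx n ℓ ζ t j) * ug n ℓ ζ t h := by
        simp only [mul_assoc]
    _ = zp ℓ ζ (g.1 j) • (xx n ℓ ζ t i * xx n ℓ ζ t j * (ug n ℓ ζ t g * ug n ℓ ζ t h)) := by
        rw [ug_mul_xx]
        simp only [mul_smul_comm, smul_mul_assoc, mul_assoc]
    _ = _ := by
        rw [ug_mul_ug, mul_smul_comm, smul_smul]

theorem gvec_apply (i j : Fin n) :
    gvec n ℓ i j = (if j = i then 1 else 0) - (if j = i + 1 then 1 else 0) := by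
  simp only [gvec, Pi.sub_apply, Pi.single_apply]

end Relations

section Exponent

variable {ℓ : ℕ} {ζ : ℂ}

theorem zp_one (hℓ : 1 < ℓ) : zp ℓ ζ 1 = ζ := by
  have : Fact (1 < ℓ) := ⟨hℓ⟩
  simp only [zp, ZMod.val_one, pow_one]

theorem zp_add [NeZero ℓ] (hζ : ζ ^ ℓ = 1) (a b : ZMod ℓ) :
    zp ℓ ζ (a + b) = zp ℓ ζ a * zp ℓ ζ b := by
  rw [zp, zp, zp, ZMod.val_add, ← pow_eq_pow_mod _ hζ, pow_add]

end Exponent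

section RankTwo

variable {ℓ : ℕ}

theorem coc_three (ζ : ℂ) (a b : Fin 3 → ZMod ℓ) :
    coc 3 ℓ ζ a b = zp ℓ ζ (-(a 0 * (b 0 + b 1))) := by
  simp only [coc, pS, Nat.reduceSub, Finset.Icc_self, Finset.sum_singleton, Finset.sum_range_succ,
    Finset.range_one]
  rfl

theorem gelt_add_gelt_add_gelt (i : Fin 3) :
    gelt 3 ℓ i + (gelt 3 ℓ (i + 1) + gelt 3 ℓ (i + 1 + 1)) = 0 := by
  ext j
  fin_cases i <;> fin_cases j <;> simp [gelt, gvec_apply]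

variable [NeZero ℓ] {ζ : ℂ}

theorem zp_mul_coc_gelt_succ_eq_zeta_mul (hℓ : 1 < ℓ) (hζ : ζ ^ ℓ = 1) (i : Fin 3) :
    zp ℓ ζ ((gelt 3 ℓ (i + 1)).1 (i + 1)) *
        coc 3 ℓ ζ (gelt 3 ℓ (i + 1)).1 (gelt 3 ℓ (i + 1 + 1)).1 =
      ζ * (zp ℓ ζ ((gelt 3 ℓ (i + 1 + 1)).1 i) *
        coc 3 ℓ ζ (gelt 3 ℓ (i + 1 + 1)).1 (gelt 3 ℓ (i + 1)).1) := by
  conv_rhs => arg 1; rw [← zp_one (ζ := ζ) hℓ]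
  simp only [coc_three, ← zp_add hζ]
  congr 1
  fin_cases i <;> simp [gelt, gvec_apply]

theorem zp_mul_coc_gelt_succ_mul_coc_gelt (hℓ : 1 < ℓ) (hζ : ζ ^ ℓ = 1) (i : Fin 3) :
    zp ℓ ζ ((gelt 3 ℓ (i + 1)).1 (i + 1)) *
        coc 3 ℓ ζ (gelt 3 ℓ (i + 1)).1 (gelt 3 ℓ (i + 1 + 1)).1 *
        coc 3 ℓ ζ (gelt 3 ℓ i).1 (gelt 3 ℓ (i + 1) + gelt 3 ℓ (i + 1 + 1)).1 = ζ := by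
  conv_rhs => rw [← zp_one (ζ := ζ) hℓ]
  simp only [coc_three, ← zp_add hζ]
  congr 1
  fin_cases i <;> simp [gelt, gvec_apply]

end RankTwo

end TGHA

open TGHA in
/-- For `n = 3`, setting `φ_i = x_i g_{i+1}` in `H` (subscripts mod 3),
one has `φ_i φ_{i+1} - ζ φ_{i+1} φ_i = ζ t_i` for all `i`. -/
theorem statement15 (ℓ : ℕ) (hℓ : 2 ≤ ℓ) (ζ : ℂ) (hζ : IsPrimitiveRoot ζ ℓ)
    (t : Fin 3 → ℂ) :
    ∀ i : Fin 3,
      (xx 3 ℓ ζ t i * ug 3 ℓ ζ t (gelt 3 ℓ (i + 1))) *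
          (xx 3 ℓ ζ t (i + 1) * ug 3 ℓ ζ t (gelt 3 ℓ (i + 1 + 1))) -
        ζ • ((xx 3 ℓ ζ t (i + 1) * ug 3 ℓ ζ t (gelt 3 ℓ (i + 1 + 1))) *
          (xx 3 ℓ ζ t i * ug 3 ℓ ζ t (gelt 3 ℓ (i + 1)))) =
      (ζ * t i) • (1 : H 3 ℓ ζ t) := by
  intro i
  have : NeZero ℓ := ⟨by omega⟩
  have hζℓ : ζ ^ ℓ = 1 := hζ.pow_eq_one
  set c := zp ℓ ζ ((gelt 3 ℓ (i + 1)).1 (i + 1)) *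
    coc 3 ℓ ζ (gelt 3 ℓ (i + 1)).1 (gelt 3 ℓ (i + 1 + 1)).1
  set s := gelt 3 ℓ (i + 1) + gelt 3 ℓ (i + 1 + 1)
  calc _ = c • ((xx 3 ℓ ζ t i * xx 3 ℓ ζ t (i + 1) - xx 3 ℓ ζ t (i + 1) * xx 3 ℓ ζ t i) *
        ug 3 ℓ ζ t s) := by
        rw [xx_mul_ug_mul_xx_mul_ug, xx_mul_ug_mul_xx_mul_ug, add_comm (gelt 3 ℓ (i + 1 + 1)),
          smul_smul, ← zp_mul_coc_gelt_succ_eq_zeta_mul hℓ hζℓ, sub_mul, smul_sub]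
    _ = (c * coc 3 ℓ ζ (gelt 3 ℓ i).1 s.1 * t i) • ug 3 ℓ ζ t (gelt 3 ℓ i + s) := by
        rw [xx_mul_xx_succ_sub, smul_mul_assoc, ug_mul_ug, smul_smul, smul_smul, mul_right_comm]
    _ = (ζ * t i) • 1 := by
        rw [gelt_add_gelt_add_gelt, ug_zero, zp_mul_coc_gelt_succ_mul_coc_gelt hℓ hζℓ]
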